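/- Let K ≥ 2 and let (𝒮, 𝒯) be a security pattern with a* ≤ K−1, a* = |S̄| and |Q| < K. Then for every prime power q, the key rate a* is achievable: there exist L ≥ 1, L_X = L, L_Z = a*·L, and a scheme satisfying the independence, uniformity, message, correctness and security constraints with L_Z/L = a*. -/

import Mathlib

open Finset
open scoped Classical

namespace WeakSecureSummation

noncomputable section

/-- Probability that random variable `X` takes value `a`, w.r.t. pmf `p`. -/
def pr {Ω α : Type*} [Fintype Ω] [DecidableEq α] (p : Ω → ℝ) (X : Ω → α) (a : α) : ℝ :=
  ∑ ω, if X ω = a then p ω else 0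

/-- Shannon entropy of `X` in `q`-ary units. -/
def H {Ω α : Type*} [Fintype Ω] [Fintype α] [DecidableEq α]
    (q : ℕ) (p : Ω → ℝ) (X : Ω → α) : ℝ :=
  -∑ a : α, pr p X a * (Real.log (pr p X a) / Real.log (q : ℝ))

/-- Conditional entropy `H(X | Y)` in `q`-ary units. -/
def Hc {Ω α β : Type*} [Fintype Ω] [Fintype α] [DecidableEq α] [Fintype β] [DecidableEq β]
    (q : ℕ) (p : Ω → ℝ) (X : Ω → α) (Y : Ω → β) : ℝ :=
  H q p (fun ω => (X ω, Y ω)) - H q p Y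

/-- Conditional mutual information `I(X ; Y | Z)` in `q`-ary units. -/
def MIc {Ω α β γ : Type*} [Fintype Ω] [Fintype α] [DecidableEq α] [Fintype β] [DecidableEq β]
    [Fintype γ] [DecidableEq γ] (q : ℕ) (p : Ω → ℝ) (X : Ω → α) (Y : Ω → β) (Z : Ω → γ) : ℝ :=
  Hc q p X Z + Hc q p Y Z - Hc q p (fun ω => (X ω, Y ω)) Z

/-- A secure-summation scheme for `K` users over the finite field `F`:
input length `L`, message length `LX`, source-key length `LZ`, a finite sample
space `Ω` with pmf `p`, inputs `W k`, source key `ZS`, keys `Z k` (with value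
types `ZT k`), and messages `X k`. -/
structure Scheme (K : ℕ) (F : Type) [Field F] [Fintype F] [DecidableEq F] where
  L : ℕ
  LX : ℕ
  LZ : ℕ
  Ω : Type
  [finΩ : Fintype Ω]
  p : Ω → ℝ
  W : Fin K → Ω → Fin L → F
  ZS : Ω → Fin LZ → F
  ZT : Fin K → Type
  [finZT : ∀ k, Fintype (ZT k)]
  [decZT : ∀ k, DecidableEq (ZT k)]
  Z : ∀ k, Ω → ZT k
  X : Fin K → Ω → Fin LX → F

attribute [instance] Scheme.finΩ Scheme.finZT Scheme.decZT

variable {K : ℕ} {F : Type} [Field F] [Fintype F] [DecidableEq F]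

/-- The sum of all inputs. -/
def Scheme.sumW (C : Scheme K F) : C.Ω → (Fin C.L → F) := fun ω => ∑ k, C.W k ω

/-- The tuple of inputs `(W k)_{k ∈ A}`. -/
def Scheme.Wtup (C : Scheme K F) (A : Finset (Fin K)) :
    C.Ω → ({x // x ∈ A} → (Fin C.L → F)) :=
  fun ω k => C.W k.1 ω

/-- The tuple of keys `(Z k)_{k ∈ A}`. -/
def Scheme.Ztup (C : Scheme K F) (A : Finset (Fin K)) :
    C.Ω → ((k : {x // x ∈ A}) → C.ZT k.1) :=
  fun ω k => C.Z k.1 ω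

/-- The tuple `((W k, Z k))_{k ∈ A}`. -/
def Scheme.WZtup (C : Scheme K F) (A : Finset (Fin K)) :
    C.Ω → ((k : {x // x ∈ A}) → (Fin C.L → F) × C.ZT k.1) :=
  fun ω k => (C.W k.1 ω, C.Z k.1 ω)

/-- The tuple of all messages `(X 1, …, X K)`. -/
def Scheme.Xall (C : Scheme K F) : C.Ω → (Fin K → Fin C.LX → F) := fun ω k => C.X k ω

/-- The tuple of all inputs `(W 1, …, W K)`. -/
def Scheme.Wall (C : Scheme K F) : C.Ω → (Fin K → Fin C.L → F) := fun ω k => C.W k ω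

/-- `p` is a valid probability mass function. -/
def Scheme.ValidP (C : Scheme K F) : Prop :=
  (∀ ω, 0 ≤ C.p ω) ∧ (∑ ω, C.p ω = 1)

/-- Inputs are uniform on `F^L`, mutually independent, and independent of the source key. -/
def Scheme.IndepUnif (C : Scheme K F) : Prop :=
  (∀ (k : Fin K) (a : Fin C.L → F), pr C.p (C.W k) a = ((Fintype.card F : ℝ) ^ C.L)⁻¹) ∧
  (∀ w : Fin K → Fin C.L → F, pr C.p C.Wall w = ∏ k, pr C.p (C.W k) (w k)) ∧
  (∀ (w : Fin K → Fin C.L → F) (z : Fin C.LZ → F),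
    pr C.p (fun ω => (C.Wall ω, C.ZS ω)) (w, z) = pr C.p C.Wall w * pr C.p C.ZS z)

/-- Each key is a deterministic function of the source key, and each message is a
deterministic function of the own input and key. -/
def Scheme.Det (C : Scheme K F) : Prop :=
  (∀ k, ∃ f : (Fin C.LZ → F) → C.ZT k, ∀ ω, C.Z k ω = f (C.ZS ω)) ∧
  (∀ k, ∃ g : (Fin C.L → F) → C.ZT k → (Fin C.LX → F), ∀ ω, C.X k ω = g (C.W k ω) (C.Z k ω))

/-- Correctness: the sum of inputs is decodable from all messages. -/
def Scheme.Correct (C : Scheme K F) : Prop :=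
  Hc (Fintype.card F) C.p C.sumW C.Xall = 0

/-- All the model constraints except security. -/
def Scheme.Good (C : Scheme K F) : Prop :=
  C.ValidP ∧ C.IndepUnif ∧ C.Det ∧ C.Correct

/-- Security for a single pair: colluding with users in `T`, nothing is revealed about
the inputs in `S` beyond the sum and what the colluders know. -/
def Scheme.SecureFor (C : Scheme K F) (S T : Finset (Fin K)) : Prop :=
  MIc (Fintype.card F) C.p (C.Wtup S) C.Xall (fun ω => (C.sumW ω, C.WZtup T ω)) = 0

/-- A security pattern: families of security input sets and colluding user sets. -/
structure Pattern (K M N : ℕ) where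
  S : Fin M → Finset (Fin K)
  T : Fin N → Finset (Fin K)

/-- The family of security input sets is monotone (closed under subsets). -/
def Pattern.MonoS {K M N : ℕ} (P : Pattern K M N) : Prop :=
  ∀ (m : Fin M) (A : Finset (Fin K)), A ⊆ P.S m → ∃ m', P.S m' = A

/-- The family of colluding user sets is monotone (closed under subsets). -/
def Pattern.MonoT {K M N : ℕ} (P : Pattern K M N) : Prop :=
  ∀ (n : Fin N) (A : Finset (Fin K)), A ⊆ P.T n → ∃ n', P.T n' = A

/-- A valid security pattern: monotone families, nonempty union of security sets,
and every colluding set of size at most `K - 2`. -/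
def Pattern.Valid {K M N : ℕ} (P : Pattern K M N) : Prop :=
  P.MonoS ∧ P.MonoT ∧ (∃ m, (P.S m).Nonempty) ∧ (∀ n, (P.T n).card ≤ K - 2)

/-- The scheme is secure for every pair of the pattern. -/
def Scheme.Secure {M N : ℕ} (C : Scheme K F) (P : Pattern K M N) : Prop :=
  ∀ m n, C.SecureFor (P.S m) (P.T n)

/-- Implicit security input set `S_I`. -/
def Pattern.SI {K M N : ℕ} (P : Pattern K M N) : Finset (Fin K) :=
  (Finset.univ.filter fun u =>
      ∃ m n, (P.S m ∪ P.T n).card = K - 1 ∧ Finset.univ \ (P.S m ∪ P.T n) = {u}) \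
    Finset.univ.biUnion P.S

/-- Total security input set `S̄`. -/
def Pattern.Sbar {K M N : ℕ} (P : Pattern K M N) : Finset (Fin K) :=
  Finset.univ.biUnion P.S ∪ P.SI

/-- `A_{m,n} = (S_m ∪ T_n) ∩ S̄`. -/
def Pattern.A {K M N : ℕ} (P : Pattern K M N) (m : Fin M) (n : Fin N) : Finset (Fin K) :=
  (P.S m ∪ P.T n) ∩ P.Sbar

/-- `a* = max_{m,n} |A_{m,n}|`. -/
def Pattern.aStar {K M N : ℕ} (P : Pattern K M N) : ℕ :=
  Finset.univ.sup fun mn : Fin M × Fin N => (P.A mn.1 mn.2).card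

/-- `Q`: union of `S_m ∪ T_n` over all pairs attaining `a*`. -/
def Pattern.Q {K M N : ℕ} (P : Pattern K M N) : Finset (Fin K) :=
  Finset.univ.biUnion fun mn : Fin M × Fin N =>
    if (P.A mn.1 mn.2).card = P.aStar then P.S mn.1 ∪ P.T mn.2 else ∅

/-- Feasibility for the linear program LP(𝒮,𝒯): variables `b k` for `k ∉ S̄`,
nonnegative, with `∑_{k ∈ [K] \ (S_m ∪ T_n)} b k ≥ 1` for every maximal pair. -/
def Pattern.LPFeasible {K M N : ℕ} (P : Pattern K M N) (b : Fin K → ℝ) : Prop :=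
  (∀ k, k ∉ P.Sbar → 0 ≤ b k) ∧ (∀ k ∈ P.Sbar, b k = 0) ∧
  ∀ m n, (P.A m n).card = P.aStar → 1 ≤ ∑ k ∈ Finset.univ \ (P.S m ∪ P.T n), b k

/-- LP objective: `max_{m,n : |A_{m,n}| = a*} ∑_{k ∈ T_n \ S̄} b k`. -/
def Pattern.LPObj {K M N : ℕ} (P : Pattern K M N) (b : Fin K → ℝ) : ℝ :=
  sSup {x : ℝ | ∃ m n, (P.A m n).card = P.aStar ∧ x = ∑ k ∈ P.T n \ P.Sbar, b k}

/-- `b*`: optimal value of the linear program. -/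
def Pattern.bStar {K M N : ℕ} (P : Pattern K M N) : ℝ :=
  sInf {v : ℝ | ∃ b, P.LPFeasible b ∧ P.LPObj b = v}

/-- Achievability of key rate `R` for pattern `P`, with a given finite field `F`. -/
def AchWith (K M N : ℕ) (P : Pattern K M N) (R : ℝ) (F : Type)
    [Field F] [Fintype F] [DecidableEq F] : Prop :=
  ∃ C : Scheme K F, 1 ≤ C.L ∧ C.Good ∧ C.Secure P ∧ (C.LZ : ℝ) / (C.L : ℝ) ≤ R

/-- Achievability of key rate `R`: some finite field (i.e. some prime power `q`)
admits a valid, correct, secure scheme of key rate at most `R`. -/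
def Achievable {K M N : ℕ} (P : Pattern K M N) (R : ℝ) : Prop :=
  ∃ (F : Type) (i1 : Field F) (i2 : Fintype F) (i3 : DecidableEq F),
    @AchWith K M N P R F i1 i2 i3

/-- The optimal key rate `R*`: infimum of achievable rates. -/
def optRate {K M N : ℕ} (P : Pattern K M N) : ℝ :=
  sInf {R : ℝ | Achievable P R}

end
end WeakSecureSummation


/-!
Take a user `u ∉ Q` (possible since `|Q| < K`) and one uniform key symbol `z_s` per `s ∈ S̄`.
User `s ∈ S̄` sends `W_s + z_s`, user `u` sends `W_u - ∑ z_s`, every other user sends `W_k`.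
Since `a* = |S̄|`, a pair attains `a*` exactly when `S̄ ⊆ S_m ∪ T_n`; hence `S̄ ⊆ Q`, so
`u ∉ S̄` and the keys cancel in the sum of the messages.

All variables are additive functions of the uniform outcome (inputs, keys), so
`I(X; Y | Z) = 0` as soon as `ker Z ⊆ (ker X ∩ ker Z) + (ker Y ∩ ker Z)`, by
`|A| |B| = |A + B| |A ∩ B|` for subgroups. For a pair `(S_m, T_n)` there is `c ∈ S̄ ∪ {u}`
outside `S_m ∪ T_n`: if `S̄ ⊆ S_m ∪ T_n`, the pair attains `a*` and `u ∉ S_m ∪ T_n`.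
Moving the inputs of `S_m` onto `c` with the opposite total gives a zero-sum input vector `v`
supported in `S̄ ∪ {u}`; the outcome `(v, -v|S̄)` produces all-zero messages and is invisible to
the colluders, and subtracting it clears the inputs of `S_m`.
-/

namespace WeakSecureSummation

noncomputable section

def uniformPmf (Ω : Type*) [Fintype Ω] : Ω → ℝ := fun _ => (Fintype.card Ω : ℝ)⁻¹

theorem sum_uniformPmf (Ω : Type*) [Fintype Ω] [Nonempty Ω] : ∑ ω, uniformPmf Ω ω = 1 := by
  simp [uniformPmf]

section Entropy

variable {Ω α β : Type*} [Fintype Ω] [DecidableEq α] [DecidableEq β]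

theorem sum_pr [Fintype α] (p : Ω → ℝ) (X : Ω → α) : ∑ a, pr p X a = ∑ ω, p ω := by
  simp only [pr]
  rw [Finset.sum_comm]
  simp

theorem pr_uniformPmf (X : Ω → α) (a : α) :
    pr (uniformPmf Ω) X a = #{ω | X ω = a} / Fintype.card Ω := by
  rw [pr, ← Finset.sum_filter]
  simp [uniformPmf, div_eq_mul_inv]

theorem pr_eq_zero_of_notMem_range (p : Ω → ℝ) {X : Ω → α} {a : α}
    (ha : a ∉ Set.range X) : pr p X a = 0 :=
  Finset.sum_eq_zero fun ω _ => if_neg fun h => ha ⟨ω, h⟩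

variable [Fintype α] [Fintype β]

theorem H_comp_of_injective (q : ℕ) (p : Ω → ℝ) (X : Ω → α) {e : α → β}
    (he : Function.Injective e) : H q p (e ∘ X) = H q p X := by
  have hpr : ∀ a, pr p (e ∘ X) (e a) = pr p X a := fun a => by
    simp only [pr, Function.comp_apply, he.eq_iff]
  have hpr_zero : ∀ b ∉ Set.range e, pr p (e ∘ X) b = 0 := fun b hb =>
    pr_eq_zero_of_notMem_range p fun ⟨ω, h⟩ => hb ⟨X ω, h⟩
  rw [H, H, Fintype.sum_of_injective e he _
    (fun b => pr p (e ∘ X) b * (Real.log (pr p (e ∘ X) b) / Real.log q))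
    (fun b hb => by simp [hpr_zero b hb]) (fun a => by rw [hpr])]

theorem Hc_comp_self (q : ℕ) (p : Ω → ℝ) (Y : Ω → α) (f : α → β) :
    Hc q p (f ∘ Y) Y = 0 := by
  have he : Function.Injective fun a => (f a, a) := fun _ _ h => congrArg Prod.snd h
  rw [Hc, sub_eq_zero]
  exact H_comp_of_injective q p Y he

end Entropy

theorem _root_.AddSubgroup.card_sup_mul_card_inf {G : Type*} [AddCommGroup G]
    (H K : AddSubgroup G) :
    Nat.card ↥(H ⊔ K) * Nat.card ↥(H ⊓ K) = Nat.card H * Nat.card K := by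
  have hsup := AddSubgroup.relIndex_mul_relIndex ⊥ K (H ⊔ K) bot_le le_sup_right
  have hH := AddSubgroup.relIndex_mul_relIndex ⊥ (H ⊓ K) H bot_le inf_le_left
  rw [AddSubgroup.relIndex_bot_left, AddSubgroup.relIndex_bot_left,
    AddSubgroup.relIndex_sup_right] at hsup
  rw [AddSubgroup.relIndex_bot_left, AddSubgroup.relIndex_bot_left, inf_comm,
    AddSubgroup.inf_relIndex_right] at hH
  rw [← hsup, ← hH, inf_comm]
  ring

section AdditiveVariables

variable {G A B C : Type*} [AddCommGroup G] [Fintype G] [AddCommGroup A] [DecidableEq A]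
  [AddCommGroup B] [Fintype B] [DecidableEq B] [AddCommGroup C] [Fintype C] [DecidableEq C]

theorem pr_uniformPmf_eq_of_mem_range (f : G →+ A) {a b : A} (ha : a ∈ Set.range f)
    (hb : b ∈ Set.range f) : pr (uniformPmf G) f a = pr (uniformPmf G) f b := by
  rw [pr_uniformPmf, pr_uniformPmf, AddMonoidHom.card_fiber_eq_of_mem_range f ha hb]

theorem pr_uniformPmf_zero (f : G →+ A) :
    pr (uniformPmf G) f 0 = Nat.card f.ker / Nat.card G := by
  rw [pr_uniformPmf, Nat.card_eq_fintype_card (α := G), ← Fintype.card_subtype]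
  congr
  simp [Nat.card_eq_fintype_card, AddMonoidHom.mem_ker]

variable [Fintype A]

theorem pr_uniformPmf_of_surjective (f : G →+ A) (hf : Function.Surjective f) (a : A) :
    pr (uniformPmf G) f a = (Fintype.card A : ℝ)⁻¹ := by
  have hsum := sum_pr (uniformPmf G) f
  rw [sum_uniformPmf, Finset.sum_congr rfl fun b _ => pr_uniformPmf_eq_of_mem_range f (hf b) (hf a),
    Finset.sum_const, Finset.card_univ, nsmul_eq_mul] at hsum
  exact eq_inv_of_mul_eq_one_right hsum

theorem H_uniformPmf (q : ℕ) (f : G →+ A) :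
    H q (uniformPmf G) f = (Real.log (Nat.card G) - Real.log (Nat.card f.ker)) / Real.log q := by
  have hconst : ∀ a, pr (uniformPmf G) f a * Real.log (pr (uniformPmf G) f a) =
      pr (uniformPmf G) f a * Real.log (pr (uniformPmf G) f 0) := by
    intro a
    by_cases ha : a ∈ Set.range f
    · rw [pr_uniformPmf_eq_of_mem_range f ha ⟨0, map_zero f⟩]
    · rw [pr_eq_zero_of_notMem_range _ ha, zero_mul, zero_mul]
  have hsum : ∑ a, pr (uniformPmf G) f a = 1 := by rw [sum_pr, sum_uniformPmf]
  have hker : (0 : ℝ) < Nat.card f.ker := by exact_mod_cast Nat.card_pos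
  have hG : (0 : ℝ) < Nat.card G := by exact_mod_cast Nat.card_pos
  simp only [H, ← mul_div_assoc, hconst, ← Finset.sum_div, ← Finset.sum_mul, hsum, one_mul,
    pr_uniformPmf_zero, Real.log_div hker.ne' hG.ne']
  ring

theorem MIc_uniformPmf_eq_zero_of_ker_le_sup (q : ℕ) (X : G →+ A) (Y : G →+ B) (Z : G →+ C)
    (h : Z.ker ≤ X.ker ⊓ Z.ker ⊔ Y.ker ⊓ Z.ker) : MIc q (uniformPmf G) X Y Z = 0 := by
  have hsup : X.ker ⊓ Z.ker ⊔ Y.ker ⊓ Z.ker = Z.ker :=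
    le_antisymm (sup_le inf_le_right inf_le_right) h
  have hinf : X.ker ⊓ Z.ker ⊓ (Y.ker ⊓ Z.ker) = X.ker ⊓ Y.ker ⊓ Z.ker := by
    rw [inf_inf_inf_comm, inf_idem]
  have hcard := AddSubgroup.card_sup_mul_card_inf (X.ker ⊓ Z.ker) (Y.ker ⊓ Z.ker)
  rw [hsup, hinf] at hcard
  have hlog : Real.log (Nat.card Z.ker) + Real.log (Nat.card ↥(X.ker ⊓ Y.ker ⊓ Z.ker)) =
      Real.log (Nat.card ↥(X.ker ⊓ Z.ker)) + Real.log (Nat.card ↥(Y.ker ⊓ Z.ker)) := by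
    rw [← Real.log_mul, ← Real.log_mul, ← Nat.cast_mul, ← Nat.cast_mul, hcard] <;>
      exact Nat.cast_ne_zero.2 Nat.card_pos.ne'
  have hXZ : (fun g => (X g, Z g)) = ⇑(X.prod Z) := rfl
  have hYZ : (fun g => (Y g, Z g)) = ⇑(Y.prod Z) := rfl
  have hXYZ : (fun g => ((X g, Y g), Z g)) = ⇑((X.prod Y).prod Z) := rfl
  simp only [MIc, Hc, hXZ, hYZ, hXYZ, H_uniformPmf, AddMonoidHom.ker_prod]
  linear_combination hlog / Real.log q

end AdditiveVariables

section Pad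

variable {ι V : Type*} [DecidableEq ι] [AddCommGroup V]

def pad (S : Finset ι) (u : ι) : (S → V) →+ (ι → V) :=
  AddMonoidHom.mk'
    (fun z k => if h : k ∈ S then z ⟨k, h⟩ else if k = u then -∑ j, z j else 0)
    fun z z' => by
      funext k
      simp only [Pi.add_apply]
      split_ifs <;> simp [Finset.sum_add_distrib, add_comm]

variable {S : Finset ι} {u : ι}

theorem pad_apply_of_mem (z : S → V) {k : ι} (hk : k ∈ S) : pad S u z k = z ⟨k, hk⟩ :=
  dif_pos hk

theorem pad_apply_self (hu : u ∉ S) (z : S → V) : pad S u z u = -∑ j, z j := by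
  simp [pad, hu]

theorem pad_apply_of_notMem (z : S → V) {k : ι} (hk : k ∉ S) (hku : k ≠ u) :
    pad S u z k = 0 := by
  simp [pad, hk, hku]

variable [Fintype ι]

theorem sum_eq_add_sum_coe (hu : u ∉ S) (f : ι → V) (hf : ∀ k ∉ S, k ≠ u → f k = 0) :
    ∑ k, f k = f u + ∑ j : S, f j := by
  rw [Finset.sum_coe_sort, ← Finset.sum_insert hu]
  refine (Finset.sum_subset (Finset.subset_univ _) fun k _ hk => hf k ?_ ?_).symm
  · exact fun h => hk (Finset.mem_insert_of_mem h)
  · exact fun h => hk (h ▸ Finset.mem_insert_self u S)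

theorem sum_pad (hu : u ∉ S) (z : S → V) : ∑ k, pad S u z k = 0 := by
  rw [sum_eq_add_sum_coe hu _ fun k => pad_apply_of_notMem z, pad_apply_self hu]
  simp [pad_apply_of_mem]

theorem pad_restrict_eq_self (hu : u ∉ S) {v : ι → V} (hv : ∑ k, v k = 0)
    (hsupp : ∀ k ∉ S, k ≠ u → v k = 0) : pad S u (fun j => v j) = v := by
  funext k
  by_cases hk : k ∈ S
  · exact pad_apply_of_mem _ hk
  by_cases hku : k = u
  · subst hku
    rw [sum_eq_add_sum_coe hu v hsupp] at hv
    rw [pad_apply_self hu, eq_neg_of_add_eq_zero_left hv]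
  · rw [pad_apply_of_notMem _ hk hku, hsupp k hk hku]

theorem exists_transfer {S' T : Finset ι} {c : ι} (hu : u ∉ S) (hS' : S' ⊆ S)
    (hc : c ∉ S' ∪ T) (hcu : c ∈ insert u S) (w : ι → V) (hwT : ∀ k ∈ T, w k = 0) :
    ∃ v : ι → V, ∑ k, v k = 0 ∧ pad S u (fun j => v j) = v ∧ (∀ k ∈ T, v k = 0) ∧
      ∀ k ∈ S', v k = w k := by
  have hcS' : c ∉ S' := fun h => hc (Finset.mem_union_left T h)
  have hvS' : ∀ k ∈ S', pad S' c (fun j => w j) k = w k := fun k hk => pad_apply_of_mem _ hk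
  refine ⟨pad S' c fun j => w j, sum_pad hcS' _, ?_, fun k hk => ?_, hvS'⟩
  · refine pad_restrict_eq_self hu (sum_pad hcS' _) fun k hkS hku =>
      pad_apply_of_notMem _ (fun h => hkS (hS' h)) ?_
    rintro rfl
    exact (Finset.mem_insert.1 hcu).elim hku hkS
  · by_cases hkS' : k ∈ S'
    · rw [hvS' k hkS', hwT k hk]
    · exact pad_apply_of_notMem _ hkS' fun h => hc (Finset.mem_union_right S' (h ▸ hk))

end Pad

section PadScheme

variable {K : ℕ} {F : Type} [Field F] [Fintype F] [DecidableEq F]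

abbrev PadSpace (F : Type) (S : Finset (Fin K)) : Type :=
  (Fin K → Fin 1 → F) × (S → Fin 1 → F)

variable (F) in
abbrev padScheme (S : Finset (Fin K)) (u : Fin K) : Scheme K F where
  L := 1
  LX := 1
  LZ := #S
  Ω := PadSpace F S
  p := uniformPmf _
  W k ω := ω.1 k
  ZS ω i := ω.2 (S.equivFin.symm i) 0
  ZT _ := Fin 1 → F
  Z k ω := pad S u ω.2 k
  X k ω := ω.1 k + pad S u ω.2 k

variable {S : Finset (Fin K)} {u : Fin K}

theorem padScheme_validP : (padScheme F S u).ValidP :=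
  ⟨fun _ => inv_nonneg.2 (Nat.cast_nonneg _), sum_uniformPmf _⟩

theorem padScheme_indepUnif : (padScheme F S u).IndepUnif := by
  let W : PadSpace F S →+ (Fin K → Fin 1 → F) := AddMonoidHom.fst _ _
  let ZS : PadSpace F S →+ (Fin #S → F) :=
    AddMonoidHom.mk' (fun ω i => ω.2 (S.equivFin.symm i) 0) fun _ _ => rfl
  have hWZS : Function.Surjective (W.prod ZS) := fun wz =>
    ⟨(wz.1, fun j _ => wz.2 (S.equivFin j)), by simp [W, ZS]⟩
  have hW : Function.Surjective W := Prod.fst_surjective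
  have hZS : Function.Surjective ZS := fun z => (hWZS (0, z)).imp fun _ h => congrArg Prod.snd h
  have hWk : ∀ k a, pr (uniformPmf _) ((Pi.evalAddMonoidHom _ k).comp W) a =
      ((Fintype.card F : ℝ) ^ 1)⁻¹ := fun k a => by
    rw [pr_uniformPmf_of_surjective _ (fun a => ⟨(Pi.single k a, 0), by simp [W]⟩)]
    simp
  refine ⟨hWk, fun w => ?_, fun w z => ?_⟩
  · show pr (uniformPmf _) W w = ∏ k, pr (uniformPmf _) ((Pi.evalAddMonoidHom _ k).comp W) (w k)
    rw [Finset.prod_congr rfl fun k _ => hWk k (w k), pr_uniformPmf_of_surjective W hW]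
    simp
  · show pr (uniformPmf _) (W.prod ZS) (w, z) = pr (uniformPmf _) W w * pr (uniformPmf _) ZS z
    rw [pr_uniformPmf_of_surjective _ hWZS, pr_uniformPmf_of_surjective _ hW,
      pr_uniformPmf_of_surjective _ hZS, Fintype.card_prod, Nat.cast_mul, mul_inv]

theorem padScheme_det : (padScheme F S u).Det := by
  refine ⟨fun k => ⟨fun z => pad S u (fun j _ => z (S.equivFin j)) k, fun ω => ?_⟩,
    fun k => ⟨fun w z => w + z, fun ω => rfl⟩⟩
  have hkeys : (fun j (_ : Fin 1) => ω.2 (S.equivFin.symm (S.equivFin j)) 0) = ω.2 := by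
    funext j i
    rw [Equiv.symm_apply_apply, Subsingleton.elim i 0]
  show pad S u ω.2 k = pad S u (fun j _ => ω.2 (S.equivFin.symm (S.equivFin j)) 0) k
  rw [hkeys]

theorem padScheme_correct (hu : u ∉ S) : (padScheme F S u).Correct := by
  have hsum : (padScheme F S u).sumW = (fun x => ∑ k, x k) ∘ (padScheme F S u).Xall := by
    funext ω
    show ∑ k, ω.1 k = ∑ k, (ω.1 k + pad S u ω.2 k)
    rw [Finset.sum_add_distrib, sum_pad hu, add_zero]
  rw [Scheme.Correct, hsum]
  exact Hc_comp_self _ _ _ _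

theorem padScheme_good (hu : u ∉ S) : (padScheme F S u).Good :=
  ⟨padScheme_validP, padScheme_indepUnif, padScheme_det, padScheme_correct hu⟩

theorem padScheme_secureFor (hu : u ∉ S) {S' T : Finset (Fin K)} (hS' : S' ⊆ S) {c : Fin K}
    (hc : c ∉ S' ∪ T) (hcu : c ∈ insert u S) : (padScheme F S u).SecureFor S' T := by
  let X : PadSpace F S →+ (S' → Fin 1 → F) :=
    AddMonoidHom.mk' (fun ω k => ω.1 k) fun _ _ => rfl
  let Y : PadSpace F S →+ (Fin K → Fin 1 → F) :=
    AddMonoidHom.fst _ _ + (pad S u).comp (AddMonoidHom.snd _ _)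
  let Z : PadSpace F S →+ (Fin 1 → F) × (T → (Fin 1 → F) × (Fin 1 → F)) :=
    AddMonoidHom.mk' (fun ω => (∑ k, ω.1 k, fun k => (ω.1 k, pad S u ω.2 k))) fun x y =>
      Prod.ext (by simp [Finset.sum_add_distrib]) (funext fun k => by simp)
  refine MIc_uniformPmf_eq_zero_of_ker_le_sup _ X Y Z fun g hg => ?_
  obtain ⟨w, z⟩ := g
  have hwT : ∀ k ∈ T, w k = 0 := fun k hk =>
    (Prod.mk_eq_zero.1 (congrFun (Prod.mk_eq_zero.1 (AddMonoidHom.mem_ker.1 hg)).2 ⟨k, hk⟩)).1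
  obtain ⟨v, hvsum, hv, hvT, hvS'⟩ := exists_transfer hu hS' hc hcu w hwT
  have hb : ((v, -fun j : S => v j) : PadSpace F S) ∈ Y.ker ⊓ Z.ker := by
    refine AddSubgroup.mem_inf.2 ⟨AddMonoidHom.mem_ker.2 ?_, AddMonoidHom.mem_ker.2 ?_⟩
    · show v + pad S u (-fun j : S => v j) = 0
      rw [map_neg, hv, add_neg_cancel]
    · show (∑ k, v k, fun k : T => (v k, pad S u (-fun j : S => v j) k)) = 0
      rw [map_neg, hv, hvsum]
      refine Prod.ext rfl (funext fun k => Prod.ext (hvT k k.2) ?_)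
      simp [hvT k k.2]
  refine AddSubgroup.mem_sup.2 ⟨(w, z) - (v, -fun j : S => v j),
    AddSubgroup.mem_inf.2 ⟨?_, sub_mem hg (AddSubgroup.mem_inf.1 hb).2⟩, _, hb,
    sub_add_cancel _ _⟩
  refine AddMonoidHom.mem_ker.2 (funext fun k => ?_)
  show w k - v k = 0
  rw [hvS' k k.2, sub_self]

end PadScheme

namespace Pattern

variable {K M N : ℕ} (P : Pattern K M N)

theorem S_subset_Sbar (m : Fin M) : P.S m ⊆ P.Sbar :=
  (Finset.subset_biUnion_of_mem P.S (Finset.mem_univ m)).trans Finset.subset_union_left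

theorem union_subset_Q {m : Fin M} {n : Fin N} (h : #(P.A m n) = P.aStar) :
    P.S m ∪ P.T n ⊆ P.Q := fun _ hx =>
  Finset.mem_biUnion.2 ⟨(m, n), Finset.mem_univ _, by rw [if_pos h]; exact hx⟩

variable {P}

theorem card_A_eq_aStar_iff (h2 : P.aStar = #P.Sbar) (m : Fin M) (n : Fin N) :
    #(P.A m n) = P.aStar ↔ P.Sbar ⊆ P.S m ∪ P.T n := by
  rw [h2, ← Finset.inter_eq_right]
  exact ⟨fun h => Finset.eq_of_subset_of_card_le Finset.inter_subset_right h.ge,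
    congrArg Finset.card⟩

theorem Sbar_subset_Q (h2 : P.aStar = #P.Sbar) : P.Sbar ⊆ P.Q := by
  intro x hx
  have hpos : 0 < P.aStar := h2 ▸ Finset.card_pos.2 ⟨x, hx⟩
  obtain ⟨mn₀, hmn₀, -⟩ := Finset.lt_sup_iff.1 hpos
  obtain ⟨mn, -, hmn⟩ := Finset.exists_mem_eq_sup _ ⟨mn₀, hmn₀⟩
    fun mn : Fin M × Fin N => #(P.A mn.1 mn.2)
  exact P.union_subset_Q hmn.symm ((card_A_eq_aStar_iff h2 _ _).1 hmn.symm hx)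

theorem exists_notMem_union (h2 : P.aStar = #P.Sbar) {u : Fin K} (hu : u ∉ P.Q)
    (m : Fin M) (n : Fin N) : ∃ c ∉ P.S m ∪ P.T n, c ∈ insert u P.Sbar := by
  by_cases h : P.Sbar ⊆ P.S m ∪ P.T n
  · exact ⟨u, fun hu' => hu (P.union_subset_Q ((card_A_eq_aStar_iff h2 m n).2 h) hu'),
      Finset.mem_insert_self _ _⟩
  · obtain ⟨c, hc, hcmn⟩ := Finset.not_subset.1 h
    exact ⟨c, hcmn, Finset.mem_insert_of_mem hc⟩

end Pattern

end

end WeakSecureSummation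

open WeakSecureSummation in
theorem achievability_otherwise_case_small_Q_general {K M N : ℕ}
    (P : Pattern K M N)
    (h2 : P.aStar = P.Sbar.card) (h3 : P.Q.card < K)
    (F : Type) [Field F] [Fintype F] [DecidableEq F] :
    ∃ C : Scheme K F, 1 ≤ C.L ∧ C.LX = C.L ∧ C.LZ = P.aStar * C.L ∧
      C.Good ∧ C.Secure P := by
  obtain ⟨u, -, hu⟩ := Finset.exists_mem_notMem_of_card_lt_card (s := P.Q) (t := univ)
    (by rwa [card_univ, Fintype.card_fin])
  have huS : u ∉ P.Sbar := fun h => hu (Pattern.Sbar_subset_Q h2 h)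
  refine ⟨padScheme F P.Sbar u, le_rfl, rfl, ((mul_one _).trans h2).symm,
    padScheme_good huS, fun m n => ?_⟩
  obtain ⟨c, hc, hcu⟩ := Pattern.exists_notMem_union h2 hu m n
  exact padScheme_secureFor huS (P.S_subset_Sbar m) hc hcu

open WeakSecureSummation in
/-- if `a* ≤ K-1`, `a* = |S̄|` and `|Q| < K`, then for every finite field
the key rate `a*` is achievable with `L_X = L` and `L_Z = a*·L`. -/
theorem achievability_otherwise_case_small_Q {K M N : ℕ} (hK : 2 ≤ K)
    (P : Pattern K M N) (hP : P.Valid)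
    (h1 : P.aStar ≤ K - 1) (h2 : P.aStar = P.Sbar.card) (h3 : P.Q.card < K)
    (F : Type) [Field F] [Fintype F] [DecidableEq F] :
    ∃ C : Scheme K F, 1 ≤ C.L ∧ C.LX = C.L ∧ C.LZ = P.aStar * C.L ∧
      C.Good ∧ C.Secure P :=
  achievability_otherwise_case_small_Q_general P h2 h3 F
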